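/- For points p_1,…,p_4 in general position in P^3, the radical ideal I = I(1^{×4}) = ∩_{j=1}^4 m_{p_j} satisfies γ(I) ≥ 4/3; in fact α(I^(3m)) ≥ 4m for all integers m ≥ 1. -/

import Mathlib

open MvPolynomial Filter

/-- The homogeneous ideal of all forms vanishing at the (projective) point with
coordinate vector `p`. -/
noncomputable def pointIdeal {k : Type*} [Field k] {σ : Type*} (p : σ → k) :
    Ideal (MvPolynomial σ k) :=
  Ideal.span { f | (∃ d, f.IsHomogeneous d) ∧ eval p f = 0 }

/-- The fat points ideal `⋂ⱼ m_{pⱼ}^{mⱼ}` (natural multiplicities). -/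
noncomputable def fatIdeal {k : Type*} [Field k] {N n : ℕ} (p : Fin n → (Fin (N + 1) → k))
    (m : Fin n → ℕ) : Ideal (MvPolynomial (Fin (N + 1)) k) :=
  ⨅ j, pointIdeal (p j) ^ (m j)

/-- The fat points ideal with integer multiplicities, with the convention
`m_p^m = (1)` for `m ≤ 0`. -/
noncomputable def fatIdealZ {k : Type*} [Field k] {N n : ℕ} (p : Fin n → (Fin (N + 1) → k))
    (m : Fin n → ℤ) : Ideal (MvPolynomial (Fin (N + 1)) k) :=
  ⨅ j, pointIdeal (p j) ^ (m j).toNat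

/-- The irrelevant maximal ideal `M = (x_0, …, x_N)`. -/
noncomputable def maxIdeal (k : Type*) [Field k] (N : ℕ) : Ideal (MvPolynomial (Fin (N + 1)) k) :=
  Ideal.span (Set.range X)

/-- `α(I)`: the least `t ≥ 0` such that `I` contains a nonzero form of degree `t`. -/
noncomputable def alpha {k : Type*} [Field k] {σ : Type*}
    (I : Ideal (MvPolynomial σ k)) : ℕ :=
  sInf { t | ∃ f ∈ I, f ≠ 0 ∧ f.IsHomogeneous t }

/-- The sequence `t ↦ α(I^{(t)})/t` attached to the fat points ideal with points `p`
and multiplicities `m`; its limit as `t → ∞` is the Waldschmidt constant `γ`. -/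
noncomputable def alphaSeq {k : Type*} [Field k] {N n : ℕ}
    (p : Fin n → (Fin (N + 1) → k)) (m : Fin n → ℕ) (t : ℕ) : ℝ :=
  (alpha (fatIdeal p fun j => t * m j) : ℝ) / t

/-- `P` holds for `n`-tuples of points of `P^N` in general position: there is a
nonempty Zariski-open subset (the complement of the zero locus of a set `S` of
polynomials in the coordinates of the tuple) of tuples of nonzero coordinate
vectors on which `P` holds. -/
def Generic (k : Type*) [Field k] (N n : ℕ)
    (P : (Fin n → (Fin (N + 1) → k)) → Prop) : Prop :=
  ∃ S : Set (MvPolynomial (Fin n × Fin (N + 1)) k),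
    (∃ p : Fin n → (Fin (N + 1) → k), (∀ j, p j ≠ 0) ∧
      ∃ f ∈ S, eval (fun q => p q.1 q.2) f ≠ 0) ∧
    ∀ p : Fin n → (Fin (N + 1) → k), (∀ j, p j ≠ 0) →
      (∃ f ∈ S, eval (fun q => p q.1 q.2) f ≠ 0) → P p

/-!
Four points whose coordinate vectors are linearly independent can be moved to the coordinate
points `e₀, …, e₃` by an invertible linear substitution, which preserves `α` of fat point ideals.
A form vanishing to order `e` at `e_j` has, in each of its monomials, degree at least `e` in the
variables other than `X_j`. Summing over `j` for one monomial of a form of degree `t` in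
`I^(3m)` gives `3t ≥ 4 · 3m`, i.e. `α(I^(3m)) ≥ 4m`, and along `t = 3m` the sequence
`α(I^(t))/t` is then at least `4/3`.
-/

open scoped Matrix

theorem Finsupp.exists_ne_apply_ne_zero_of_degree_eq {σ : Type*} {a : σ →₀ ℕ} {j : σ} {d : ℕ}
    (ha : a ≠ Finsupp.single j d) (hd : a.degree = d) : ∃ i ≠ j, a i ≠ 0 := by
  by_contra! h
  have hsingle : a = Finsupp.single j (a j) := by
    ext i
    rcases eq_or_ne i j with rfl | hij
    · simp
    · simp [h i hij, Finsupp.single_eq_of_ne hij]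
  rw [hsingle, Finsupp.degree_single] at hd
  exact ha (hd ▸ hsingle)

namespace MvPolynomial

section LinearSubst

variable {σ R : Type*} [Fintype σ]

noncomputable def linearSubst [CommSemiring R] (A : Matrix σ σ R) :
    MvPolynomial σ R →ₐ[R] MvPolynomial σ R :=
  bind₁ fun i => ∑ j, C (A i j) * X j

theorem eval_linearSubst [CommSemiring R] (A : Matrix σ σ R) (q : σ → R) (f : MvPolynomial σ R) :
    eval q (linearSubst A f) = eval (A *ᵥ q) f := by
  simp only [linearSubst, eval, eval₂Hom_bind₁]
  congr
  funext i
  simp [Matrix.mulVec, dotProduct]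

theorem linearSubst_comp_linearSubst [CommSemiring R] (A B : Matrix σ σ R) :
    (linearSubst A).comp (linearSubst B) = linearSubst (B * A) := by
  refine algHom_ext fun i => ?_
  simp only [linearSubst, AlgHom.coe_comp, Function.comp_apply, bind₁_X_right, map_sum, map_mul,
    algHom_C, algebraMap_eq, Finset.mul_sum, Matrix.mul_apply, Finset.sum_mul, mul_assoc]
  exact Finset.sum_comm

theorem linearSubst_one [CommSemiring R] [DecidableEq σ] :
    linearSubst (1 : Matrix σ σ R) = AlgHom.id R _ := by
  refine algHom_ext fun i => ?_
  simp [linearSubst, Matrix.one_apply]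

theorem linearSubst_injective [CommRing R] [DecidableEq σ] {A : Matrix σ σ R}
    (hA : IsUnit A.det) : Function.Injective (linearSubst A) :=
  Function.LeftInverse.injective (g := linearSubst A⁻¹) fun f => by
    rw [← AlgHom.comp_apply, linearSubst_comp_linearSubst, Matrix.mul_nonsing_inv A hA,
      linearSubst_one, AlgHom.id_apply]

theorem IsHomogeneous.linearSubst [CommSemiring R] {f : MvPolynomial σ R} {d : ℕ}
    (hf : f.IsHomogeneous d) (A : Matrix σ σ R) : (linearSubst A f).IsHomogeneous d := by
  simpa [MvPolynomial.linearSubst] using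
    hf.aeval _ fun i => IsHomogeneous.sum _ _ _ fun j _ => isHomogeneous_C_mul_X (A i j) j

theorem linearSubst_mem_pointIdeal_pow {k : Type*} [Field k] (A : Matrix σ σ k) {p q : σ → k}
    (hpq : A *ᵥ q = p) {e : ℕ} {f : MvPolynomial σ k} (hf : f ∈ pointIdeal p ^ e) :
    linearSubst A f ∈ pointIdeal q ^ e := by
  have hmap : (pointIdeal p).map (linearSubst A) ≤ pointIdeal q := by
    rw [pointIdeal, Ideal.map_span, Ideal.span_le]
    rintro _ ⟨g, ⟨⟨d, hg⟩, hgp⟩, rfl⟩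
    exact Ideal.subset_span ⟨⟨d, hg.linearSubst A⟩, by rw [eval_linearSubst, hpq, hgp]⟩
  have := Ideal.mem_map_of_mem (linearSubst A) hf
  rw [Ideal.map_pow] at this
  exact Ideal.pow_right_mono hmap e this

end LinearSubst

section CoordinatePoints

variable {σ R : Type*}

theorem le_sum_of_mem_span_X_pow [CommSemiring R] {s : Finset σ} {e : ℕ} {f : MvPolynomial σ R}
    (hf : f ∈ Ideal.span (X '' (s : Set σ)) ^ e) : ∀ a ∈ f.support, e ≤ ∑ i ∈ s, a i := by
  classical
  induction e generalizing f with
  | zero => exact fun _ _ => Nat.zero_le _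
  | succ e ih =>
    rw [pow_succ] at hf
    refine Submodule.mul_induction_on hf (fun g hg h hh a ha => ?_) fun x y hx hy a ha => ?_
    · obtain ⟨b, hb, c, hc, rfl⟩ := Finset.mem_add.mp (support_mul _ _ ha)
      obtain ⟨i, hi, hci⟩ := mem_ideal_span_X_image.mp hh c hc
      have hc1 : 1 ≤ ∑ i ∈ s, c i :=
        (Nat.one_le_iff_ne_zero.mpr hci).trans (Finset.single_le_sum (by simp) hi)
      simp only [Finsupp.add_apply, Finset.sum_add_distrib]
      exact add_le_add (ih hg b hb) hc1
    · rcases Finset.mem_union.mp (support_add ha) with h | h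
      exacts [hx a h, hy a h]

variable [DecidableEq σ] {k : Type*} [Field k]

theorem X_mul_X_mem_pointIdeal_piSingle_one {i i' : σ} (hii' : i ≠ i') (j : σ) :
    X i * X i' ∈ pointIdeal (Pi.single j 1 : σ → k) := by
  refine Ideal.subset_span ⟨⟨2, (isHomogeneous_X k i).mul (isHomogeneous_X k i')⟩, ?_⟩
  rcases eq_or_ne i j with rfl | hij
  · simp [hii'.symm]
  · simp [Pi.single_apply, hij]

variable [Fintype σ]

theorem eval_piSingle_one_of_isHomogeneous [CommSemiring R] {f : MvPolynomial σ R} {d : ℕ}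
    (hf : f.IsHomogeneous d) (j : σ) :
    eval (Pi.single j 1) f = coeff (Finsupp.single j d) f := by
  rw [eval_eq', Finset.sum_eq_single (Finsupp.single j d)]
  · simp [Pi.single_apply, Finsupp.single_apply]
  · intro b hb hbj
    obtain ⟨i, hij, hbi⟩ :=
      Finsupp.exists_ne_apply_ne_zero_of_degree_eq hbj (hf.degree_eq_sum_deg_support hb).symm
    rw [Finset.prod_eq_zero (Finset.mem_univ i) (by simp [hij, hbi]), mul_zero]
  · intro h
    rw [notMem_support_iff.mp h, zero_mul]

theorem pointIdeal_piSingle_one_le (j : σ) :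
    pointIdeal (Pi.single j 1 : σ → k) ≤ Ideal.span (X '' ↑(Finset.univ.erase j)) := by
  refine Ideal.span_le.mpr fun f ⟨⟨d, hf⟩, hfp⟩ => mem_ideal_span_X_image.mpr fun a ha => ?_
  rw [eval_piSingle_one_of_isHomogeneous hf] at hfp
  have had : a ≠ Finsupp.single j d := fun h => mem_support_iff.mp ha (h ▸ hfp)
  obtain ⟨i, hij, hai⟩ :=
    Finsupp.exists_ne_apply_ne_zero_of_degree_eq had (hf.degree_eq_sum_deg_support ha).symm
  exact ⟨i, by simpa using hij, hai⟩

theorem card_mul_add_le_card_mul_of_mem_pointIdeal_piSingle_one {f : MvPolynomial σ k}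
    (hf0 : f ≠ 0) {t : ℕ} (hf : f.IsHomogeneous t) {e : ℕ}
    (he : ∀ j, f ∈ pointIdeal (Pi.single j 1 : σ → k) ^ e) :
    Fintype.card σ * e + t ≤ Fintype.card σ * t := by
  obtain ⟨a, ha⟩ := support_nonempty.mpr hf0
  have hsum : ∑ i, a i = t := by
    rw [← Finsupp.degree_eq_sum, Finsupp.degree_apply, ← hf.degree_eq_sum_deg_support ha]
  have hj (j : σ) : e + a j ≤ t := by
    have := le_sum_of_mem_span_X_pow
      (Ideal.pow_right_mono (pointIdeal_piSingle_one_le j) e (he j)) a ha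
    rw [← hsum, ← Finset.sum_erase_add _ _ (Finset.mem_univ j)]
    omega
  calc Fintype.card σ * e + t = ∑ j : σ, (e + a j) := by
        rw [Finset.sum_add_distrib, hsum]; simp
    _ ≤ ∑ _j : σ, t := Finset.sum_le_sum fun j _ => hj j
    _ = Fintype.card σ * t := by simp

end CoordinatePoints

end MvPolynomial

open MvPolynomial

section FatPoints

variable {k : Type*} [Field k] {N n : ℕ}

theorem linearSubst_mem_fatIdeal {p q : Fin n → Fin (N + 1) → k}
    {A : Matrix (Fin (N + 1)) (Fin (N + 1)) k}
    (hpq : ∀ j, A *ᵥ q j = p j) {m : Fin n → ℕ} {f : MvPolynomial (Fin (N + 1)) k}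
    (hf : f ∈ fatIdeal p m) : linearSubst A f ∈ fatIdeal q m :=
  Ideal.mem_iInf.mpr fun j => linearSubst_mem_pointIdeal_pow A (hpq j) (Ideal.mem_iInf.mp hf j)

theorem exists_isHomogeneous_mem_fatIdeal_of_mulVec {p q : Fin n → Fin (N + 1) → k}
    {A : Matrix (Fin (N + 1)) (Fin (N + 1)) k} (hA : IsUnit A.det) (hpq : ∀ j, A *ᵥ q j = p j)
    {m : Fin n → ℕ} {t : ℕ} (h : ∃ f ∈ fatIdeal p m, f ≠ 0 ∧ f.IsHomogeneous t) :
    ∃ g ∈ fatIdeal q m, g ≠ 0 ∧ g.IsHomogeneous t := by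
  obtain ⟨f, hf, hf0, hft⟩ := h
  exact ⟨linearSubst A f, linearSubst_mem_fatIdeal hpq hf,
    (map_ne_zero_iff _ (linearSubst_injective hA)).mpr hf0, hft.linearSubst A⟩

theorem alpha_fatIdeal_eq_of_mulVec {p q : Fin n → Fin (N + 1) → k}
    {A : Matrix (Fin (N + 1)) (Fin (N + 1)) k} (hA : IsUnit A.det) (hpq : ∀ j, A *ᵥ q j = p j)
    (m : Fin n → ℕ) : alpha (fatIdeal p m) = alpha (fatIdeal q m) := by
  have hqp (j : Fin n) : A⁻¹ *ᵥ p j = q j := by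
    rw [← hpq, Matrix.mulVec_mulVec, Matrix.nonsing_inv_mul A hA, Matrix.one_mulVec]
  have hA' : IsUnit A⁻¹.det := Matrix.isUnit_nonsing_inv_det_iff.mpr hA
  unfold alpha
  congr 1
  ext t
  exact ⟨exists_isHomogeneous_mem_fatIdeal_of_mulVec hA hpq,
    exists_isHomogeneous_mem_fatIdeal_of_mulVec hA' hqp⟩

theorem add_two_mul_le_add_one_mul_alpha_fatIdeal_piSingle (e : ℕ) :
    (N + 2) * e ≤ (N + 1) * alpha (fatIdeal (fun j : Fin (N + 2) => (Pi.single j 1 : _ → k))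
      fun _ => e) := by
  -- `alpha` is an `sInf` over `ℕ`, which is `0` on the empty set: a witness is needed.
  have hne : {t | ∃ f ∈ fatIdeal (fun j : Fin (N + 2) => (Pi.single j 1 : _ → k)) (fun _ => e),
      f ≠ 0 ∧ f.IsHomogeneous t}.Nonempty :=
    ⟨2 * e, (X 0 * X 1) ^ e,
      Ideal.mem_iInf.mpr fun j =>
        Ideal.pow_mem_pow (X_mul_X_mem_pointIdeal_piSingle_one (by simp) j) e,
      pow_ne_zero _ (mul_ne_zero (X_ne_zero _) (X_ne_zero _)),
      ((isHomogeneous_X k _).mul (isHomogeneous_X k _)).pow e⟩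
  obtain ⟨f, hf, hf0, hft⟩ := Nat.sInf_mem hne
  have := card_mul_add_le_card_mul_of_mem_pointIdeal_piSingle_one hf0 hft (Ideal.mem_iInf.mp hf)
  rw [Fintype.card_fin] at this
  unfold alpha
  linarith

end FatPoints

theorem generic_of_forall_det_ne_zero {k : Type*} [Field k] {N : ℕ}
    {P : (Fin (N + 1) → Fin (N + 1) → k) → Prop} (hP : ∀ p, (Matrix.of p).det ≠ 0 → P p) :
    Generic k N (N + 1) P := by
  let detPoly : MvPolynomial (Fin (N + 1) × Fin (N + 1)) k := (Matrix.of fun j i => X (j, i)).det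
  have eval_detPoly (p : Fin (N + 1) → Fin (N + 1) → k) :
      eval (fun q => p q.1 q.2) detPoly = (Matrix.of p).det := by
    rw [RingHom.map_det]
    congr 1
    ext j i
    simp
  refine ⟨{detPoly}, ⟨fun j => Pi.single j 1, fun j => by simp, detPoly, rfl, ?_⟩,
    fun p _ ⟨f, hf, hfp⟩ => hP p ?_⟩
  · have h1 : Matrix.of (fun j => Pi.single j 1 : Fin (N + 1) → Fin (N + 1) → k) = 1 := by
      ext i j
      simp [Matrix.one_apply, Pi.single_apply, eq_comm]
    rw [eval_detPoly (fun j => Pi.single j 1), h1, Matrix.det_one]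
    exact one_ne_zero
  · rw [Set.mem_singleton_iff.mp hf, eval_detPoly] at hfp
    exact hfp

theorem le_of_tendsto_alphaSeq {k : Type*} [Field k] {N n : ℕ} {p : Fin n → Fin (N + 1) → k}
    {μ : Fin n → ℕ} {b c : ℕ} (hb : 0 < b)
    (hα : ∀ m, 1 ≤ m → c * m ≤ alpha (fatIdeal p fun j => b * m * μ j)) {γ : ℝ}
    (hγ : Tendsto (alphaSeq p μ) atTop (nhds γ)) : (c : ℝ) / b ≤ γ := by
  have hbm : Tendsto (fun m : ℕ => b * m) atTop atTop :=
    tendsto_id.const_mul_atTop' hb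
  refine ge_of_tendsto (hγ.comp hbm) ?_
  filter_upwards [eventually_ge_atTop 1] with m hm
  have hpos : (0 : ℝ) < b * m := by positivity
  have : (c : ℝ) * m ≤ alpha (fatIdeal p fun j => b * m * μ j) := by exact_mod_cast hα m hm
  rw [Function.comp_apply, alphaSeq, Nat.cast_mul, le_div_iff₀ hpos]
  calc (c : ℝ) / b * (b * m) = c * m := by field_simp
    _ ≤ _ := this

theorem statement10_general (k : Type*) [Field k] :
    Generic k 3 4 (fun p =>
      (∀ γ : ℝ, Tendsto (alphaSeq p (fun _ => 1)) atTop (nhds γ) → 4 / 3 ≤ γ) ∧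
      ∀ m : ℕ, 1 ≤ m → 4 * m ≤ alpha (fatIdeal p (fun _ => 3 * m))) := by
  refine generic_of_forall_det_ne_zero fun p hp => ?_
  have hα (m : ℕ) : 4 * m ≤ alpha (fatIdeal p fun _ => 3 * m) := by
    rw [alpha_fatIdeal_eq_of_mulVec (A := (Matrix.of p)ᵀ) (q := fun j => Pi.single j 1)
      (by simpa using hp) (fun j => by simp)]
    exact (by omega : ∀ a : ℕ, 4 * (3 * m) ≤ 3 * a → 4 * m ≤ a) _
      (add_two_mul_le_add_one_mul_alpha_fatIdeal_piSingle (N := 2) (3 * m))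
  refine ⟨fun γ hγ => ?_, fun m _ => hα m⟩
  exact_mod_cast le_of_tendsto_alphaSeq (b := 3) (c := 4) three_pos
    (fun m _ => by simpa using hα m) hγ

/-- For `4` points in general position in `ℙ³`, the radical ideal `I = I(1^{×4})`
satisfies `γ(I) ≥ 4/3`; in fact `α(I^(3m)) ≥ 4m` for all `m ≥ 1`. -/
theorem statement10 (k : Type*) [Field k] [CharZero k] :
    Generic k 3 4 (fun p =>
      (∀ γ : ℝ, Tendsto (alphaSeq p (fun _ => 1)) atTop (nhds γ) → 4 / 3 ≤ γ) ∧
      ∀ m : ℕ, 1 ≤ m → 4 * m ≤ alpha (fatIdeal p (fun _ => 3 * m))) :=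
  statement10_general k
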